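/- Let p be an odd prime, ν ≥ 1 an integer, and A, B, C, D integers. If min(ν, v_p(C)) < min(ν, v_p(A)) or min(ν, v_p(D)) < min(ν, v_p(B)), where v_p denotes the p-adic valuation (with v_p(0) treated as larger than ν), then ∑_{x,y mod p^ν} e_{p^ν}(Ax² + By² + Cx + Dy) = 0. -/

import Mathlib

/-!
Both sums factor, so it suffices that `∑ₓ e_{p^ν}(A x² + C x) = 0` when `γ = v_p(C) < ν` and
`p^(γ+1) ∣ A`. Translating `x ↦ x + h` with `h = p^(ν-γ-1)` kills `A h` modulo `p^ν` and
multiplies the sum by `e_{p^ν}(C h) ≠ 1`, since `v_p(C h) = ν - 1`.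
-/

/-- `e_q(t) = exp(2πit/q)`. -/
noncomputable def eq' (q : ℕ) (t : ℤ) : ℂ :=
  Complex.exp (2 * Real.pi * Complex.I * t / q)

open Finset

lemma eq'_add (q : ℕ) (s t : ℤ) : eq' q (s + t) = eq' q s * eq' q t := by
  rw [eq', eq', eq', ← Complex.exp_add]
  push_cast
  ring_nf

lemma eq'_eq_stdAddChar (N : ℕ) [NeZero N] (t : ℤ) : eq' N t = ZMod.stdAddChar (t : ZMod N) :=
  (ZMod.stdAddChar_coe t).symm

lemma sum_range_eq_sum_zmod {M : Type*} [AddCommMonoid M] (N : ℕ) [NeZero N] (f : ZMod N → M) :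
    ∑ x ∈ range N, f x = ∑ x : ZMod N, f x :=
  sum_nbij' (↑) ZMod.val (fun _ _ => mem_univ _) (fun z _ => mem_range.2 z.val_lt)
    (fun _ hx => ZMod.val_natCast_of_lt (mem_range.1 hx)) (fun z _ => ZMod.natCast_zmod_val z)
    (fun _ _ => rfl)

theorem AddChar.sum_quadratic_eq_zero {R M : Type*} [CommRing R] [Fintype R] [CommRing M]
    [IsDomain M] (ψ : AddChar R M) {a c h : R} (hah : a * h = 0) (hch : ψ (c * h) ≠ 1) :
    ∑ x, ψ (a * x ^ 2 + c * x) = 0 := by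
  have shift (x : R) : ψ (a * (x + h) ^ 2 + c * (x + h)) = ψ (c * h) * ψ (a * x ^ 2 + c * x) := by
    rw [← AddChar.map_add_eq_mul]
    congr 1
    linear_combination (2 * x + h) * hah
  have invariant : ψ (c * h) * ∑ x, ψ (a * x ^ 2 + c * x) = ∑ x, ψ (a * x ^ 2 + c * x) := by
    simp_rw [mul_sum, ← shift]
    exact Fintype.sum_equiv (Equiv.addRight h) _ _ fun _ => rfl
  exact (mul_left_eq_self₀.1 invariant).resolve_left hch

lemma sum_range_eq'_quadratic_eq_zero (N : ℕ) [NeZero N] {A C h : ℤ} (hA : (N : ℤ) ∣ A * h)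
    (hC : ¬ (N : ℤ) ∣ C * h) :
    ∑ x ∈ range N, eq' N (A * (x : ℤ) ^ 2 + C * (x : ℤ)) = 0 := by
  simp_rw [eq'_eq_stdAddChar]
  push_cast
  rw [sum_range_eq_sum_zmod N fun x : ZMod N => ZMod.stdAddChar ((A : ZMod N) * x ^ 2 + (C : ZMod N) * x)]
  refine AddChar.sum_quadratic_eq_zero _ (h := (h : ZMod N)) ?_ ?_
  · exact_mod_cast (ZMod.intCast_zmod_eq_zero_iff_dvd _ _).2 hA
  · rw [← AddChar.map_zero_eq_one (ZMod.stdAddChar (N := N)), ZMod.injective_stdAddChar.ne_iff]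
    exact_mod_cast mt (ZMod.intCast_zmod_eq_zero_iff_dvd _ _).1 hC

lemma exists_pow_dvd_not_dvd_of_min_padicValInt_lt (p ν : ℕ) [Fact p.Prime] {A C : ℤ}
    (h : min ν (if C = 0 then ν + 1 else padicValInt p C)
      < min ν (if A = 0 then ν + 1 else padicValInt p A)) :
    ∃ k ≤ ν, (p : ℤ) ^ k ∣ A ∧ ¬ (p : ℤ) ^ k ∣ C := by
  have hC : C ≠ 0 := by rintro rfl; simp at h
  rw [if_neg hC] at h
  refine ⟨padicValInt p C + 1, by omega, ?_, fun hdvd => ?_⟩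
  · rcases eq_or_ne A 0 with rfl | hA
    · exact dvd_zero _
    · rw [if_neg hA] at h
      exact (padicValInt_dvd_iff _ _).2 (.inr (by omega))
  · rcases (padicValInt_dvd_iff _ _).1 hdvd with hC' | hv
    · exact hC hC'
    · omega

lemma sum_range_eq'_quadratic_prime_pow_eq_zero (p ν : ℕ) [Fact p.Prime] {A C : ℤ}
    (h : min ν (if C = 0 then ν + 1 else padicValInt p C)
      < min ν (if A = 0 then ν + 1 else padicValInt p A)) :
    ∑ x ∈ range (p ^ ν), eq' (p ^ ν) (A * (x : ℤ) ^ 2 + C * (x : ℤ)) = 0 := by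
  obtain ⟨k, hkν, hA, hC⟩ := exists_pow_dvd_not_dvd_of_min_padicValInt_lt p ν h
  have hpow : ((p ^ ν : ℕ) : ℤ) = (p : ℤ) ^ k * (p : ℤ) ^ (ν - k) := by
    rw [← pow_add, Nat.add_sub_cancel' hkν]
    push_cast
    rfl
  have hp : (p : ℤ) ^ (ν - k) ≠ 0 := pow_ne_zero _ (by exact_mod_cast (Fact.out : p.Prime).ne_zero)
  refine sum_range_eq'_quadratic_eq_zero (p ^ ν) (h := (p : ℤ) ^ (ν - k)) ?_ ?_
  · rw [hpow]
    exact mul_dvd_mul_right hA _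
  · rwa [hpow, mul_dvd_mul_iff_right hp]

theorem exp_sum_quadratic_vanishes_general (p : ℕ) (hp : p.Prime)
    (ν : ℕ) (A B C D : ℤ)
    (h : min ν (if C = 0 then ν + 1 else padicValInt p C)
          < min ν (if A = 0 then ν + 1 else padicValInt p A) ∨
        min ν (if D = 0 then ν + 1 else padicValInt p D)
          < min ν (if B = 0 then ν + 1 else padicValInt p B)) :
    ∑ x ∈ Finset.range (p ^ ν), ∑ y ∈ Finset.range (p ^ ν),
        eq' (p ^ ν) (A * (x : ℤ) ^ 2 + B * (y : ℤ) ^ 2 + C * (x : ℤ) + D * (y : ℤ)) = 0 := by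
  have := Fact.mk hp
  have split (x y : ℕ) :
      eq' (p ^ ν) (A * (x : ℤ) ^ 2 + B * (y : ℤ) ^ 2 + C * (x : ℤ) + D * (y : ℤ))
        = eq' (p ^ ν) (A * (x : ℤ) ^ 2 + C * (x : ℤ)) *
          eq' (p ^ ν) (B * (y : ℤ) ^ 2 + D * (y : ℤ)) := by
    rw [← eq'_add]
    ring_nf
  simp_rw [split, ← sum_mul_sum]
  rcases h with h | h
  · rw [sum_range_eq'_quadratic_prime_pow_eq_zero p ν h, zero_mul]
  · rw [sum_range_eq'_quadratic_prime_pow_eq_zero p ν h, mul_zero]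

/-- For an odd prime `p`, `ν ≥ 1` and integers `A, B, C, D`, if
`min(ν, v_p(C)) < min(ν, v_p(A))` or `min(ν, v_p(D)) < min(ν, v_p(B))`
(with `v_p(0)` treated as larger than `ν`), then
`∑_{x,y mod p^ν} e_{p^ν}(Ax² + By² + Cx + Dy) = 0`. -/
theorem exp_sum_quadratic_vanishes (p : ℕ) (hp : p.Prime) (hodd : Odd p)
    (ν : ℕ) (hν : 1 ≤ ν) (A B C D : ℤ)
    (h : min ν (if C = 0 then ν + 1 else padicValInt p C)
          < min ν (if A = 0 then ν + 1 else padicValInt p A) ∨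
        min ν (if D = 0 then ν + 1 else padicValInt p D)
          < min ν (if B = 0 then ν + 1 else padicValInt p B)) :
    ∑ x ∈ Finset.range (p ^ ν), ∑ y ∈ Finset.range (p ^ ν),
        eq' (p ^ ν) (A * (x : ℤ) ^ 2 + B * (y : ℤ) ^ 2 + C * (x : ℤ) + D * (y : ℤ)) = 0 :=
  exp_sum_quadratic_vanishes_general p hp ν A B C D h
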